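/- Let Ψ : ℝ^d → ℝ^d be a diffeomorphism with Ψ(0) = 0, and define Ψ̃ : ℝ^d × ℝ → ℝ^d by Ψ̃(v,r) = r⁻¹Ψ(rv) for r ≠ 0 and Ψ̃(v,0) = DΨ(0)(v). Then the restriction of Ψ̃ to ℝ^d × [-1,1] is a proper map, i.e., preimages of compact sets are compact. -/

import Mathlib

set_option maxHeartbeats 1000000
set_option synthInstance.maxHeartbeats 200000


/-- Let `Ψ : ℝ^d → ℝ^d` be a smooth diffeomorphism with `Ψ 0 = 0`, and let
`Ψt (v, r) = r⁻¹ • Ψ (r • v)` for `r ≠ 0`, `Ψt (v, 0) = DΨ(0)(v)`.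
Then the restriction of `Ψt` to `ℝ^d × [-1,1]` is proper: the preimage of any
compact set, intersected with `ℝ^d × [-1,1]`, is compact. -/
theorem stmt1 {d : ℕ} (Ψ Ψinv : EuclideanSpace ℝ (Fin d) → EuclideanSpace ℝ (Fin d))
    (hΨ : ContDiff ℝ (⊤ : ℕ∞) Ψ) (hΨinv : ContDiff ℝ (⊤ : ℕ∞) Ψinv)
    (hli : Function.LeftInverse Ψinv Ψ) (hri : Function.RightInverse Ψinv Ψ)
    (h0 : Ψ 0 = 0)
    (Ψt : EuclideanSpace ℝ (Fin d) × ℝ → EuclideanSpace ℝ (Fin d))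
    (hΨt : ∀ v : EuclideanSpace ℝ (Fin d), ∀ r : ℝ, r ≠ 0 → Ψt (v, r) = r⁻¹ • Ψ (r • v))
    (hΨt0 : ∀ v : EuclideanSpace ℝ (Fin d), Ψt (v, 0) = fderiv ℝ Ψ 0 v) :
    ∀ C : Set (EuclideanSpace ℝ (Fin d)), IsCompact C →
      IsCompact (Ψt ⁻¹' C ∩ {p : EuclideanSpace ℝ (Fin d) × ℝ | p.2 ∈ Set.Icc (-1 : ℝ) 1}) := by
  intro C hC
  set φ := fderiv ℝ Ψ 0 with hφ
  have hdiff : Differentiable ℝ Ψ := hΨ.differentiable (by simp)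
  have hdiffinv : Differentiable ℝ Ψinv := hΨinv.differentiable (by simp)
  have hfd : Continuous (fderiv ℝ Ψ) := hΨ.continuous_fderiv (by simp)
  have hfdinv : Continuous (fderiv ℝ Ψinv) := hΨinv.continuous_fderiv (by simp)
  -- Key mean value estimate comparing Ψ with its derivative at 0
  have key : ∀ (y : EuclideanSpace ℝ (Fin d)) (δ C0 : ℝ), ‖y‖ ≤ δ →
      (∀ x : EuclideanSpace ℝ (Fin d), ‖x‖ ≤ δ → ‖fderiv ℝ Ψ x - φ‖ ≤ C0) →
      ‖Ψ y - φ y‖ ≤ C0 * ‖y‖ := by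
    intro y δ C0 hy hb
    have h := Convex.norm_image_sub_le_of_norm_hasFDerivWithin_le'
      (f := Ψ) (f' := fderiv ℝ Ψ) (φ := φ) (s := Metric.closedBall (0 : EuclideanSpace ℝ (Fin d)) δ)
      (x := (0 : EuclideanSpace ℝ (Fin d))) (y := y)
      (fun x _ => (hdiff x).hasFDerivAt.hasFDerivWithinAt)
      (fun x hx => hb x (by simpa [Metric.mem_closedBall, dist_eq_norm] using hx))
      (convex_closedBall 0 δ)
      (by simp only [Metric.mem_closedBall, dist_self]; exact le_trans (norm_nonneg y) hy)
      (by simpa [Metric.mem_closedBall, dist_eq_norm] using hy)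
    simpa [h0] using h
  -- Continuity of Ψt
  have hcont : Continuous Ψt := by
    rw [continuous_iff_continuousAt]
    rintro ⟨v₀, r₀⟩
    rcases ne_or_eq r₀ 0 with hr | hr
    · have hcΨ : Continuous (fun p : EuclideanSpace ℝ (Fin d) × ℝ => Ψ (p.2 • p.1)) :=
        hΨ.continuous.comp (continuous_snd.smul continuous_fst)
      have h1 : ContinuousAt (fun p : EuclideanSpace ℝ (Fin d) × ℝ => p.2⁻¹ • Ψ (p.2 • p.1)) (v₀, r₀) :=
        (continuousAt_snd.inv₀ hr).smul hcΨ.continuousAt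
      refine h1.congr ?_
      have hopen : IsOpen {p : EuclideanSpace ℝ (Fin d) × ℝ | p.2 ≠ 0} :=
        isOpen_compl_singleton.preimage continuous_snd
      filter_upwards [hopen.mem_nhds hr] with p hp
      exact (hΨt p.1 p.2 hp).symm
    · subst hr
      have hTg : Filter.Tendsto (fun p : EuclideanSpace ℝ (Fin d) × ℝ => Ψt p - φ p.1) (nhds (v₀, 0)) (nhds 0) := by
        rw [NormedAddCommGroup.tendsto_nhds_zero]
        intro ε hε
        set M : ℝ := ‖v₀‖ + 1 with hM
        have hMpos : 0 < M := by positivity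
        have hεM : 0 < ε / (2 * M) := by positivity
        obtain ⟨δ, hδpos, hδ⟩ := Metric.continuousAt_iff.1
          (hfd.continuousAt (x := (0 : EuclideanSpace ℝ (Fin d)))) (ε / (2 * M)) hεM
        have hbound : ∀ x : EuclideanSpace ℝ (Fin d), ‖x‖ ≤ δ / 2 → ‖fderiv ℝ Ψ x - φ‖ ≤ ε / (2 * M) := by
          intro x hx
          have hd : dist x 0 < δ := by
            rw [dist_zero_right]; linarith
          have h2 := hδ hd
          rw [dist_eq_norm] at h2
          rw [hφ]
          exact le_of_lt h2
        have hA : ∀ᶠ p : EuclideanSpace ℝ (Fin d) × ℝ in nhds (v₀, 0), ‖p.1 - v₀‖ < 1 := by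
          have : IsOpen {p : EuclideanSpace ℝ (Fin d) × ℝ | ‖p.1 - v₀‖ < 1} := by
            have : {p : EuclideanSpace ℝ (Fin d) × ℝ | ‖p.1 - v₀‖ < 1} = Prod.fst ⁻¹' Metric.ball v₀ 1 := by
              ext p; simp [Metric.mem_ball, dist_eq_norm]
            rw [this]; exact (Metric.isOpen_ball).preimage continuous_fst
          exact this.mem_nhds (by simp)
        have hB : ∀ᶠ p : EuclideanSpace ℝ (Fin d) × ℝ in nhds (v₀, 0), |p.2| < δ / (2 * M) := by
          have hpos : 0 < δ / (2 * M) := by positivity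
          have : IsOpen {p : EuclideanSpace ℝ (Fin d) × ℝ | |p.2| < δ / (2 * M)} := by
            have : {p : EuclideanSpace ℝ (Fin d) × ℝ | |p.2| < δ / (2 * M)} = Prod.snd ⁻¹' Metric.ball (0 : ℝ) (δ / (2 * M)) := by
              ext p; simp [Metric.mem_ball, Real.dist_eq]
            rw [this]; exact (Metric.isOpen_ball).preimage continuous_snd
          exact this.mem_nhds (by simpa using hpos)
        filter_upwards [hA, hB] with p hp1 hp2
        obtain ⟨v, r⟩ := p
        simp only at hp1 hp2 ⊢
        have hvM : ‖v‖ ≤ M := by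
          have := norm_sub_norm_le v v₀
          rw [hM]; linarith [le_of_lt hp1, this]
        rcases eq_or_ne r 0 with hr0 | hr0
        · subst hr0
          simp [hΨt0, hφ, hε]
        · rw [hΨt v r hr0]
          have hrv : ‖r • v‖ ≤ δ / 2 := by
            rw [norm_smul, Real.norm_eq_abs]
            calc |r| * ‖v‖ ≤ (δ / (2 * M)) * M := by
                  apply mul_le_mul (le_of_lt hp2) hvM (norm_nonneg v) (le_of_lt (by positivity))
              _ = δ / 2 := by field_simp
          have hkey := key (r • v) (δ / 2) (ε / (2 * M)) hrv hbound
          have heq : r⁻¹ • Ψ (r • v) - φ v = r⁻¹ • (Ψ (r • v) - φ (r • v)) := by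
            rw [smul_sub, map_smul, smul_smul, inv_mul_cancel₀ hr0, one_smul]
          rw [heq, norm_smul, norm_inv, Real.norm_eq_abs]
          have habs : 0 < |r| := abs_pos.2 hr0
          calc |r|⁻¹ * ‖Ψ (r • v) - φ (r • v)‖
              ≤ |r|⁻¹ * (ε / (2 * M) * ‖r • v‖) := by
                apply mul_le_mul_of_nonneg_left hkey (by positivity)
            _ = ε / (2 * M) * ‖v‖ := by
                rw [norm_smul, Real.norm_eq_abs]; field_simp
            _ ≤ ε / (2 * M) * M := by
                apply mul_le_mul_of_nonneg_left hvM (le_of_lt hεM)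
            _ = ε / 2 := by field_simp
            _ < ε := by linarith
      have hfin : Filter.Tendsto Ψt (nhds (v₀, 0)) (nhds (Ψt (v₀, 0))) := by
        have h2 : Filter.Tendsto (fun p : EuclideanSpace ℝ (Fin d) × ℝ => φ p.1) (nhds (v₀, 0)) (nhds (φ v₀)) :=
          (φ.continuous.comp continuous_fst).continuousAt
        have h3 := hTg.add h2
        simp only [sub_add_cancel, zero_add] at h3
        rw [hΨt0 v₀]
        exact h3
      exact hfin
  -- Closedness of the set
  have hclosed : IsClosed (Ψt ⁻¹' C ∩ {p : EuclideanSpace ℝ (Fin d) × ℝ | p.2 ∈ Set.Icc (-1 : ℝ) 1}) :=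
    (hC.isClosed.preimage hcont).inter (isClosed_Icc.preimage continuous_snd)
  -- Bound on C
  obtain ⟨M₁, hM₁pos, hCM₁⟩ := hC.isBounded.subset_closedBall_lt 0 0
  -- Lipschitz bound for Ψinv on closedBall 0 M₁
  obtain ⟨K, hK⟩ := (isCompact_closedBall (0 : EuclideanSpace ℝ (Fin d)) M₁).exists_bound_of_continuousOn
    hfdinv.continuousOn
  have hK0 : 0 ≤ K := le_trans (norm_nonneg _) (hK 0 (by simp [le_of_lt hM₁pos]))
  have hinv0 : Ψinv 0 = 0 := by have h := hli 0; rwa [h0] at h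
  have hlip : ∀ y : EuclideanSpace ℝ (Fin d), ‖y‖ ≤ M₁ → ‖Ψinv y‖ ≤ K * ‖y‖ := by
    intro y hy
    have h := Convex.norm_image_sub_le_of_norm_hasFDerivWithin_le
      (f := Ψinv) (f' := fderiv ℝ Ψinv) (s := Metric.closedBall (0 : EuclideanSpace ℝ (Fin d)) M₁)
      (x := (0 : EuclideanSpace ℝ (Fin d))) (y := y)
      (fun x _ => (hdiffinv x).hasFDerivAt.hasFDerivWithinAt) hK
      (convex_closedBall 0 M₁)
      (by simp [le_of_lt hM₁pos])
      (by simpa [Metric.mem_closedBall, dist_eq_norm] using hy)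
    simpa [hinv0] using h
  -- chain rule at 0
  have hchain : ∀ w : EuclideanSpace ℝ (Fin d), fderiv ℝ Ψinv 0 (φ w) = w := by
    have hcomp : Ψinv ∘ Ψ = id := funext fun x => hli x
    have h1 : fderiv ℝ (Ψinv ∘ Ψ) 0 = (fderiv ℝ Ψinv (Ψ 0)).comp (fderiv ℝ Ψ 0) :=
      fderiv_comp 0 (hdiffinv (Ψ 0)) (hdiff 0)
    rw [hcomp, h0, fderiv_id] at h1
    intro w
    have := congrArg (fun L : EuclideanSpace ℝ (Fin d) →L[ℝ] EuclideanSpace ℝ (Fin d) => L w) h1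
    simpa [hφ] using this.symm
  -- the set is bounded
  set R : ℝ := max (K * M₁) (‖fderiv ℝ Ψinv 0‖ * M₁) with hR
  have hsub : Ψt ⁻¹' C ∩ {p : EuclideanSpace ℝ (Fin d) × ℝ | p.2 ∈ Set.Icc (-1 : ℝ) 1} ⊆
      Metric.closedBall (0 : EuclideanSpace ℝ (Fin d)) R ×ˢ Set.Icc (-1 : ℝ) 1 := by
    rintro ⟨v, r⟩ ⟨hmem, hIcc⟩
    simp only [Set.mem_preimage] at hmem
    simp only [Set.mem_setOf_eq] at hIcc
    refine Set.mem_prod.2 ⟨?_, hIcc⟩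
    rw [Metric.mem_closedBall, dist_zero_right]
    rcases eq_or_ne r 0 with hr0 | hr0
    · subst hr0
      rw [hΨt0 v] at hmem
      have hmem' : ‖φ v‖ ≤ M₁ := by
        have := hCM₁ hmem
        simpa [Metric.mem_closedBall, dist_zero_right, hφ] using this
      have : ‖v‖ ≤ ‖fderiv ℝ Ψinv 0‖ * M₁ := by
        calc ‖v‖ = ‖fderiv ℝ Ψinv 0 (φ v)‖ := by rw [hchain v]
          _ ≤ ‖fderiv ℝ Ψinv 0‖ * ‖φ v‖ := (fderiv ℝ Ψinv 0).le_opNorm _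
          _ ≤ ‖fderiv ℝ Ψinv 0‖ * M₁ := by
              apply mul_le_mul_of_nonneg_left hmem' (norm_nonneg _)
      exact le_trans this (le_max_right _ _)
    · rw [hΨt v r hr0] at hmem
      have hmem' : ‖r⁻¹ • Ψ (r • v)‖ ≤ M₁ := by
        have := hCM₁ hmem
        simpa [Metric.mem_closedBall, dist_zero_right] using this
      have habs : 0 < |r| := abs_pos.2 hr0
      have habs1 : |r| ≤ 1 := abs_le.2 ⟨hIcc.1, hIcc.2⟩
      have hΨrv : ‖Ψ (r • v)‖ ≤ |r| * M₁ := by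
        rw [norm_smul, norm_inv, Real.norm_eq_abs] at hmem'
        calc ‖Ψ (r • v)‖ = |r| * (|r|⁻¹ * ‖Ψ (r • v)‖) := by field_simp
          _ ≤ |r| * M₁ := mul_le_mul_of_nonneg_left hmem' (le_of_lt habs)
      have hΨrv' : ‖Ψ (r • v)‖ ≤ M₁ := le_trans hΨrv (by nlinarith)
      have hrv : ‖r • v‖ ≤ K * (|r| * M₁) := by
        calc ‖r • v‖ = ‖Ψinv (Ψ (r • v))‖ := by rw [hli]
          _ ≤ K * ‖Ψ (r • v)‖ := hlip _ hΨrv'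
          _ ≤ K * (|r| * M₁) := mul_le_mul_of_nonneg_left hΨrv hK0
      have : ‖v‖ ≤ K * M₁ := by
        rw [norm_smul, Real.norm_eq_abs] at hrv
        have := le_of_mul_le_mul_left (by linarith [hrv] : |r| * ‖v‖ ≤ |r| * (K * M₁)) habs
        exact this
      exact le_trans this (le_max_left _ _)
  exact ((isCompact_closedBall (0 : EuclideanSpace ℝ (Fin d)) R).prod isCompact_Icc).of_isClosed_subset hclosed hsub
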